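/- arXiv:2402.14149 — 3 statements merged into one kernel-verified Lean document; each statement's English description precedes it below -/
import Mathlib

section
/- For the single seed-bank block counting chain with two individuals, the expected time to the most recent common ancestor started from two dormant blocks equals 1 + (4c+3)/(2λ) + (2c² + c)/(2λ²). Concretely, the unique solution (x, y, z) of the linear system x = 1/(2λ) + y, y = 1/(c+λ) + (c/(c+λ))·x + (λ/(c+λ))·z, z = 1/(1+2c) + (2c/(1+2c))·y satisfies x = 1 + (4c+3)/(2λ) + (2c²+c)/(2λ²). -/
/-- For the single seed-bank block counting chain with two individuals,
the solution of the linear system for the expected times to the MRCA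
satisfies `E[T_MRCA(0,2δ_λ)] = 1 + (4c+3)/(2λ) + (2c²+c)/(2λ²)`. -/
theorem stmt_6 (c lam x y z : ℝ) (hc : 0 < c) (hlam : 0 < lam)
    (hx : x = 1 / (2 * lam) + y)
    (hy : y = 1 / (c + lam) + (c / (c + lam)) * x + (lam / (c + lam)) * z)
    (hz : z = 1 / (1 + 2 * c) + (2 * c / (1 + 2 * c)) * y) :
    x = 1 + (4 * c + 3) / (2 * lam) + (2 * c ^ 2 + c) / (2 * lam ^ 2) := by
  have hc_lam : c + lam ≠ 0 := by positivity
  have h_one_two_c : 1 + 2 * c ≠ 0 := by positivity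
  have hlam_ne : lam ≠ 0 := hlam.ne'
  -- Substituting `x` and `z` turns the middle equation into `λ y / (1 + 2c) = 1 + c / (2λ) + λ / (1 + 2c)`.
  have hy_sol : y = 1 + (2 * c + 1) / lam + (2 * c ^ 2 + c) / (2 * lam ^ 2) := by
    rw [hx, hz] at hy
    field_simp at hy ⊢
    linear_combination hy
  rw [hx, hy_sol]
  field_simp
  ring
end

section
/- With x, y, z as the solution of the single seed-bank recurrence system, the ordering z ≤ y ≤ x holds: E[T_MRCA(2,0)] ≤ E[T_MRCA(1,δ_λ)] ≤ E[T_MRCA(0,2δ_λ)]. -/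
/-- For the single seed-bank two-individual system, the expected times to the
MRCA are ordered: `E[T_MRCA(2,0)] ≤ E[T_MRCA(1,δ_λ)] ≤ E[T_MRCA(0,2δ_λ)]`. -/
theorem stmt_7 (c lam x y z : ℝ) (hc : 0 < c) (hlam : 0 < lam)
    (hx : x = 1 / (2 * lam) + y)
    (hy : y = 1 / (c + lam) + (c / (c + lam)) * x + (lam / (c + lam)) * z)
    (hz : z = 1 / (1 + 2 * c) + (2 * c / (1 + 2 * c)) * y) :
    z ≤ y ∧ y ≤ x := by
  have hcl : c + lam > 0 := by linarith
  have hxy : y ≤ x := by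
    rw [hx]
    have : 0 < 1 / (2 * lam) := by positivity
    linarith
  constructor
  · have h1 : (c + lam) * y = 1 + c * x + lam * z := by
      field_simp at hy; linarith
    nlinarith [mul_nonneg hc.le (sub_nonneg.mpr hxy)]
  · exact hxy
end

section
/- Let (p(t), q(t, ·)) solve the forward equations of the continuum seed-bank single-line process: dp/dt = -c·p(t) + ∫ λ q(t,dλ), and q(t, dλ) = e^{-λt} q(0, dλ) + (∫_0^t e^{-λs} p(t-s) ds)·μ(dλ), with p(t) + ‖q(t,·)‖_{TV} = 1 and p continuous with lim_{t→∞} p(t) = 1/(1 + ∫ (1/λ) μ(dλ)). If ∫_{(0,∞)} (1/λ) μ(dλ) < ∞, then for every Borel set B ⊆ (0,∞), lim_{t→∞} q(t, B) = (1/(1 + ∫ (1/λ) μ(dλ))) · ∫_B (1/λ) μ(dλ). -/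
/-!
For each rate `l > 0` the dormant mass at `l` sees `p` through the kernel `s ↦ e^{-l s}` on
`(0, ∞)`, of total mass `1 / l`. As `p` is bounded and tends to `P = 1 / (1 + I)`, dominated
convergence in `s` gives `∫_0^t e^{-l s} p(t - s) ds → P / l`; these integrals are bounded by the
`μ`-integrable `1 / l`, so a second dominated convergence in `l` gives the limit of the `μ`-part.
The `q₀`-part `∫_B e^{-l t} q₀(dl)` tends to `0` because `q₀` is finite and charges only `l > 0`.
-/

open MeasureTheory Filter Set Topology

section Convolution

variable {k p : ℝ → ℝ} {M : ℝ}

theorem intervalIntegral_zero_eq_setIntegral_Ioi_indicator {f : ℝ → ℝ} {t : ℝ} (ht : 0 ≤ t) :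
    ∫ s in (0 : ℝ)..t, f s = ∫ s in Ioi 0, (Iic t).indicator f s := by
  rw [intervalIntegral.integral_of_le ht, setIntegral_indicator measurableSet_Iic, Ioi_inter_Iic]

theorem norm_indicator_mul_comp_sub_le (hpM : ∀ t, ‖p t‖ ≤ M) (t s : ℝ) :
    ‖(Iic t).indicator (fun s => k s * p (t - s)) s‖ ≤ ‖k s‖ * M :=
  calc ‖(Iic t).indicator (fun s => k s * p (t - s)) s‖ ≤ ‖k s * p (t - s)‖ :=
        norm_indicator_le_norm_self _ _
    _ ≤ ‖k s‖ * M := by rw [norm_mul]; exact mul_le_mul_of_nonneg_left (hpM _) (norm_nonneg _)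

theorem norm_intervalIntegral_mul_comp_sub_le (hk : IntegrableOn k (Ioi 0))
    (hpM : ∀ t, ‖p t‖ ≤ M) {t : ℝ} (ht : 0 ≤ t) :
    ‖∫ s in (0 : ℝ)..t, k s * p (t - s)‖ ≤ (∫ s in Ioi 0, ‖k s‖) * M := by
  rw [intervalIntegral_zero_eq_setIntegral_Ioi_indicator ht, ← integral_mul_const]
  exact norm_integral_le_of_norm_le (hk.norm.mul_const M)
    (Eventually.of_forall (norm_indicator_mul_comp_sub_le hpM t))

theorem tendsto_intervalIntegral_mul_comp_sub {P : ℝ} (hk : IntegrableOn k (Ioi 0))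
    (hp : Measurable p) (hpM : ∀ t, ‖p t‖ ≤ M) (hpP : Tendsto p atTop (𝓝 P)) :
    Tendsto (fun t => ∫ s in (0 : ℝ)..t, k s * p (t - s)) atTop
      (𝓝 ((∫ s in Ioi 0, k s) * P)) := by
  have hmeas : ∀ t, AEStronglyMeasurable (fun s => k s * p (t - s)) (volume.restrict (Ioi 0)) :=
    fun t => hk.aestronglyMeasurable.mul
      (hp.comp (measurable_const.sub measurable_id)).aestronglyMeasurable
  have hlim : ∀ s, Tendsto (fun t => (Iic t).indicator (fun s => k s * p (t - s)) s) atTop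
      (𝓝 (k s * P)) := fun s => by
    have hshift : Tendsto (fun t => p (t - s)) atTop (𝓝 P) := by
      simpa only [sub_eq_add_neg, Function.comp_def, id] using
        hpP.comp (tendsto_atTop_add_const_right _ (-s) tendsto_id)
    refine (hshift.const_mul (k s)).congr' ?_
    filter_upwards [eventually_ge_atTop s] with t hst
    exact (indicator_of_mem (f := fun s => k s * p (t - s)) (mem_Iic.2 hst)).symm
  have hdom := tendsto_integral_filter_of_dominated_convergence (l := atTop)
    (μ := volume.restrict (Ioi 0)) (fun s => ‖k s‖ * M)
    (Eventually.of_forall fun t => (hmeas t).indicator measurableSet_Iic)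
    (Eventually.of_forall fun t => Eventually.of_forall (norm_indicator_mul_comp_sub_le hpM t))
    (hk.norm.mul_const M) (Eventually.of_forall hlim)
  rw [integral_mul_const] at hdom
  refine hdom.congr' ?_
  filter_upwards [eventually_ge_atTop 0] with t ht
  exact (intervalIntegral_zero_eq_setIntegral_Ioi_indicator ht).symm

end Convolution

theorem integral_exp_neg_mul_Ioi_zero {l : ℝ} (hl : 0 < l) :
    ∫ s in Ioi (0 : ℝ), Real.exp (-l * s) = 1 / l := by
  rw [integral_exp_mul_Ioi (neg_neg_of_pos hl), mul_zero, Real.exp_zero, neg_div_neg_eq]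

theorem tendsto_exp_neg_mul_atTop_nhds_zero {l : ℝ} (hl : 0 < l) :
    Tendsto (fun t => Real.exp (-l * t)) atTop (𝓝 0) :=
  Real.tendsto_exp_atBot.comp (tendsto_id.const_mul_atTop_of_neg (neg_neg_of_pos hl))

theorem tendsto_integral_exp_neg_mul_atTop {ν : Measure ℝ} [IsFiniteMeasure ν]
    (hν : ∀ᵐ l ∂ν, 0 < l) :
    Tendsto (fun t => ∫ l, Real.exp (-l * t) ∂ν) atTop (𝓝 0) := by
  rw [← integral_zero ℝ ℝ (μ := ν)]
  refine tendsto_integral_filter_of_dominated_convergence (l := atTop) (fun _ => 1)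
    (Eventually.of_forall fun t => by fun_prop) ?_ (integrable_const 1)
    (hν.mono fun l hl => tendsto_exp_neg_mul_atTop_nhds_zero hl)
  filter_upwards [eventually_ge_atTop 0] with t ht
  filter_upwards [hν] with l hl
  rw [Real.norm_eq_abs, Real.abs_exp, Real.exp_le_one_iff]
  nlinarith

theorem tendsto_integral_intervalIntegral_exp_neg_mul_comp_sub {ν : Measure ℝ} {p : ℝ → ℝ}
    {M P : ℝ} (hν : ∀ᵐ l ∂ν, 0 < l) (hinv : Integrable (fun l => 1 / l) ν)
    (hp : Measurable p) (hpM : ∀ t, ‖p t‖ ≤ M) (hpP : Tendsto p atTop (𝓝 P)) :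
    Tendsto (fun t => ∫ l, (∫ s in (0 : ℝ)..t, Real.exp (-l * s) * p (t - s)) ∂ν) atTop
      (𝓝 (P * ∫ l, 1 / l ∂ν)) := by
  rw [← integral_const_mul]
  refine tendsto_integral_filter_of_dominated_convergence (fun l => 1 / l * M) ?_ ?_
    (hinv.mul_const M) ?_
  · filter_upwards [eventually_ge_atTop 0] with t ht
    simp_rw [intervalIntegral.integral_of_le ht]
    exact (StronglyMeasurable.integral_prod_right
      (f := fun l s => Real.exp (-l * s) * p (t - s))
      (Measurable.stronglyMeasurable (by fun_prop))).aestronglyMeasurable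
  · filter_upwards [eventually_ge_atTop 0] with t ht
    filter_upwards [hν] with l hl
    simpa only [Real.norm_eq_abs, Real.abs_exp, integral_exp_neg_mul_Ioi_zero hl] using
      norm_intervalIntegral_mul_comp_sub_le (exp_neg_integrableOn_Ioi 0 hl) hpM ht
  · filter_upwards [hν] with l hl
    simpa only [integral_exp_neg_mul_Ioi_zero hl, one_div_mul_eq_div, mul_one_div] using
      tendsto_intervalIntegral_mul_comp_sub (exp_neg_integrableOn_Ioi 0 hl) hp hpM hpP

theorem stmt_9_general (μ q0 : Measure ℝ) [IsFiniteMeasure q0]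
    (hint : IntegrableOn (fun l => 1 / l) (Set.Ioi 0) μ)
    (I : ℝ)
    (p : ℝ → ℝ) (hpm : Measurable p) (hp01 : ∀ t, p t ∈ Set.Icc (0 : ℝ) 1)
    (hplim : Filter.Tendsto p Filter.atTop (nhds (1 / (1 + I))))
    (q : ℝ → Set ℝ → ℝ)
    (hq : ∀ t, 0 ≤ t → ∀ B, MeasurableSet B → B ⊆ Set.Ioi 0 →
      q t B = (∫ l in B, Real.exp (-l * t) ∂q0)
        + ∫ l in B, (∫ s in (0 : ℝ)..t, Real.exp (-l * s) * p (t - s)) ∂μ) :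
    ∀ B, MeasurableSet B → B ⊆ Set.Ioi 0 →
      Filter.Tendsto (fun t => q t B) Filter.atTop
        (nhds ((1 / (1 + I)) * ∫ l in B, 1 / l ∂μ)) := by
  intro B hB hBpos
  have hp1 : ∀ t, ‖p t‖ ≤ 1 := fun t => by
    rw [Real.norm_eq_abs, abs_of_nonneg (hp01 t).1]; exact (hp01 t).2
  have hlim := (tendsto_integral_exp_neg_mul_atTop (ν := q0.restrict B)
      (ae_restrict_of_forall_mem hB hBpos)).add
    (tendsto_integral_intervalIntegral_exp_neg_mul_comp_sub (ae_restrict_of_forall_mem hB hBpos)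
      (hint.mono_set hBpos) hpm hp1 hplim)
  rw [zero_add] at hlim
  refine hlim.congr' ?_
  filter_upwards [eventually_ge_atTop 0] with t ht
  exact (hq t ht B hB hBpos).symm

/-- Limiting distribution of the ancestral line: if `∫ (1/λ) μ(dλ) < ∞` and
`q(t,·)` is given by the variation-of-constants representation
`q(t,dλ) = e^{-λt} q(0,dλ) + (∫_0^t e^{-λs} p(t-s) ds)·μ(dλ)` with
`p(t) → 1/(1+∫(1/λ)μ(dλ))`, then for every Borel `B ⊆ (0,∞)`,
`q(t,B) → (1/(1+∫(1/λ)μ(dλ)))·∫_B (1/λ) μ(dλ)` as `t → ∞`. -/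
theorem stmt_9 (μ q0 : Measure ℝ) [IsFiniteMeasure μ] [IsFiniteMeasure q0]
    (c : ℝ) (hc : 0 < c) (hcμ : (μ Set.univ).toReal = c)
    (hμ0 : μ (Set.Iic 0) = 0) (hq00 : q0 (Set.Iic 0) = 0) (hq0sub : q0 Set.univ ≤ 1)
    (hint : IntegrableOn (fun l => 1 / l) (Set.Ioi 0) μ)
    (I : ℝ) (hI : I = ∫ l in Set.Ioi (0 : ℝ), 1 / l ∂μ)
    (p : ℝ → ℝ) (hpm : Measurable p) (hp01 : ∀ t, p t ∈ Set.Icc (0 : ℝ) 1)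
    (hplim : Filter.Tendsto p Filter.atTop (nhds (1 / (1 + I))))
    (q : ℝ → Set ℝ → ℝ)
    (hq : ∀ t, 0 ≤ t → ∀ B, MeasurableSet B → B ⊆ Set.Ioi 0 →
      q t B = (∫ l in B, Real.exp (-l * t) ∂q0)
        + ∫ l in B, (∫ s in (0 : ℝ)..t, Real.exp (-l * s) * p (t - s)) ∂μ) :
    ∀ B, MeasurableSet B → B ⊆ Set.Ioi 0 →
      Filter.Tendsto (fun t => q t B) Filter.atTop
        (nhds ((1 / (1 + I)) * ∫ l in B, 1 / l ∂μ)) :=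
  stmt_9_general μ q0 hint I p hpm hp01 hplim q hq
end
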